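/- Let 𝒜 be a complex Banach algebra and let L₁, L₂ ∈ 𝒜 with L := L₁ + L₂. Then for every t ≥ 0, exp((t/2)L₁)·exp(t L₂)·exp((t/2)L₁) − exp(t L) = ∫₀ᵗ exp((s/2)L₁) · [ (1/2)L₁ + L₂ , exp(s L₂)·exp((s/2)L₁) ] · exp((t−s)L) ds. -/

import Mathlib

/-!
With `A = (1/2) • L₁` and `S s = exp (s • A) * exp (s • L₂) * exp (s • A)`, the function
`s ↦ S s * exp ((t - s) • L)` has derivative `(S' s - S s * L) * exp ((t - s) • L)`, so integrating
it over `[0, t]` gives `S t - exp (t • L)` as an integral (Duhamel's formula). Since `A` commutes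
with `exp (s • A)` and `L = A + A + L₂`, the defect `S' s - S s * L` is
`exp (s • A) * [A + L₂, exp (s • L₂) * exp (s • A)]`.
-/

open MeasureTheory NormedSpace
open scoped Interval

section ExpSmul

variable {𝔸 : Type*} [NormedRing 𝔸] [NormedAlgebra ℝ 𝔸] [CompleteSpace 𝔸]

theorem continuous_exp_smul (A : 𝔸) : Continuous fun s : ℝ => exp (s • A) :=
  continuous_iff_continuousAt.2 fun s => (hasDerivAt_exp_smul_const' A s).continuousAt

theorem hasDerivAt_exp_sub_smul (L : 𝔸) (t s : ℝ) :
    HasDerivAt (fun u : ℝ => exp ((t - u) • L)) (-(L * exp ((t - s) • L))) s := by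
  simpa [Function.comp_def] using
    (hasDerivAt_exp_smul_const' L (t - s)).scomp s ((hasDerivAt_id s).const_sub t)

theorem sub_mul_exp_smul_eq_integral {g g' : ℝ → 𝔸} {t : ℝ} (L : 𝔸)
    (hg : ∀ s ∈ [[0, t]], HasDerivAt g (g' s) s) (hg' : ContinuousOn g' [[0, t]]) :
    g t - g 0 * exp (t • L) = ∫ s in (0 : ℝ)..t, (g' s - g s * L) * exp ((t - s) • L) := by
  have hderiv : ∀ s ∈ [[0, t]], HasDerivAt (fun u => g u * exp ((t - u) • L))
      ((g' s - g s * L) * exp ((t - s) • L)) s := fun s hs => by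
    convert (hg s hs).fun_mul (hasDerivAt_exp_sub_smul L t s) using 1
    rw [sub_mul, mul_neg, mul_assoc, sub_eq_add_neg]
  have hcont : ContinuousOn (fun s => (g' s - g s * L) * exp ((t - s) • L)) [[0, t]] :=
    (hg'.sub (HasDerivAt.continuousOn hg |>.mul continuousOn_const)).mul
      (fun s _ => (hasDerivAt_exp_sub_smul L t s).continuousAt.continuousWithinAt)
  rw [intervalIntegral.integral_eq_sub_of_hasDerivAt hderiv hcont.intervalIntegrable]
  simp

theorem hasDerivAt_exp_smul_mul_exp_smul_mul_exp_smul (A B : 𝔸) (s : ℝ) :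
    HasDerivAt (fun u : ℝ => exp (u • A) * exp (u • B) * exp (u • A))
      (exp (s • A) * ((A + B) * (exp (s • B) * exp (s • A)) + exp (s • B) * exp (s • A) * A))
      s := by
  have hA := hasDerivAt_exp_smul_const' A s
  have hB := hasDerivAt_exp_smul_const' B s
  have hcomm : A * exp (s • A) = exp (s • A) * A :=
    ((Commute.refl A).smul_right s).exp_right.eq
  convert (hA.fun_mul hB).fun_mul hA using 1
  rw [hcomm]
  noncomm_ring

end ExpSmul

theorem strang_error_first_representation
    {𝒜 : Type*} [NormedRing 𝒜] [NormedAlgebra ℂ 𝒜] [CompleteSpace 𝒜]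
    (L₁ L₂ : 𝒜) (t : ℝ) :
    exp ((t / 2) • L₁) * exp (t • L₂) * exp ((t / 2) • L₁)
        - exp (t • (L₁ + L₂)) =
      ∫ s in (0:ℝ)..t,
        exp ((s / 2) • L₁) *
          (((1 / 2 : ℝ) • L₁ + L₂) * (exp (s • L₂) * exp ((s / 2) • L₁))
            - (exp (s • L₂) * exp ((s / 2) • L₁)) * ((1 / 2 : ℝ) • L₁ + L₂)) *
          exp ((t - s) • (L₁ + L₂)) := by
  set A : 𝒜 := (1 / 2 : ℝ) • L₁
  have hL₁ : L₁ = A + A := by rw [← add_smul]; norm_num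
  have hhalf : ∀ s : ℝ, (s / 2) • L₁ = s • A := fun s => by rw [smul_smul, mul_one_div]
  have hcont : Continuous fun s : ℝ =>
      exp (s • A) * ((A + L₂) * (exp (s • L₂) * exp (s • A)) + exp (s • L₂) * exp (s • A) * A) := by
    have := continuous_exp_smul A
    have := continuous_exp_smul L₂
    fun_prop
  have hduhamel := sub_mul_exp_smul_eq_integral (t := t) (L₁ + L₂)
    (fun s _ => hasDerivAt_exp_smul_mul_exp_smul_mul_exp_smul A L₂ s) hcont.continuousOn
  simp only [zero_smul, exp_zero, one_mul] at hduhamel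
  simp only [hhalf]
  rw [hduhamel]
  refine intervalIntegral.integral_congr fun s _ => ?_
  congr 1
  rw [hL₁]
  noncomm_ring
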